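/- arXiv:2507.15662 — 9 statements merged into one kernel-verified Lean document; each statement's English description precedes it below -/
import Mathlib

section
/- Let n ≥ 2. For all vectors u, w ∈ ℝⁿ, one has ‖Δ(uwᵀ + wuᵀ)‖_F² = 4·⟨Δ(uuᵀ), Δ(wwᵀ)⟩; in particular ‖Δ(uwᵀ + wuᵀ)‖_F² ≤ 4·⟨Δ(uuᵀ), Δ(wwᵀ)⟩. -/
open Matrix

namespace SNL

noncomputable def delta {n : ℕ} (X : Matrix (Fin n) (Fin n) ℝ) : Matrix (Fin n) (Fin n) ℝ :=
  Matrix.of fun i j => (X i i + X j j - 2 * X i j) / 2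

noncomputable def deltaStar {n : ℕ} (H : Matrix (Fin n) (Fin n) ℝ) : Matrix (Fin n) (Fin n) ℝ :=
  Matrix.diagonal (fun i => ∑ k, H i k) - H

def frobInner {n m : ℕ} (X Y : Matrix (Fin n) (Fin m) ℝ) : ℝ := ∑ i, ∑ j, X i j * Y i j

def frobNormSq {n m : ℕ} (X : Matrix (Fin n) (Fin m) ℝ) : ℝ := frobInner X X

noncomputable def snlCost {n ℓ k : ℕ} (Y : Matrix (Fin n) (Fin ℓ) ℝ)
    (Z : Matrix (Fin n) (Fin k) ℝ) : ℝ :=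
  frobNormSq (delta (Z * Zᵀ - Y * Yᵀ))

def IsFirstOrderCritical {n ℓ k : ℕ} (Y : Matrix (Fin n) (Fin ℓ) ℝ)
    (Z : Matrix (Fin n) (Fin k) ℝ) : Prop :=
  deltaStar (delta (Z * Zᵀ - Y * Yᵀ)) * Z = 0

def IsSecondOrderCritical {n ℓ k : ℕ} (Y : Matrix (Fin n) (Fin ℓ) ℝ)
    (Z : Matrix (Fin n) (Fin k) ℝ) : Prop :=
  IsFirstOrderCritical Y Z ∧
    ∀ W : Matrix (Fin n) (Fin k) ℝ,
      0 ≤ frobInner (W * Wᵀ) (deltaStar (delta (Z * Zᵀ - Y * Yᵀ)))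
          + (1 / 2) * frobNormSq (delta (W * Zᵀ + Z * Wᵀ))

noncomputable def centering (n : ℕ) : Matrix (Fin n) (Fin n) ℝ :=
  1 - ((n : ℝ)⁻¹) • Matrix.of (fun _ _ => (1 : ℝ))

def diagM {n : ℕ} (X : Matrix (Fin n) (Fin n) ℝ) : Matrix (Fin n) (Fin n) ℝ :=
  Matrix.diagonal (fun i => X i i)

noncomputable def Gamma {n : ℕ} (X : Matrix (Fin n) (Fin n) ℝ) : Matrix (Fin n) (Fin n) ℝ :=
  centering n * diagM X * centering n

noncomputable def Psi {n : ℕ} (X : Matrix (Fin n) (Fin n) ℝ) : Matrix (Fin n) (Fin n) ℝ :=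
  ((n : ℝ) / 2) • (centering n * diagM X * centering n) +
    ((1 / 2) * Matrix.trace X) • centering n

noncomputable def lambdaMax {n : ℕ} (X : Matrix (Fin n) (Fin n) ℝ) : ℝ :=
  sSup {r : ℝ | ∃ v : Fin n → ℝ, (∑ i, v i ^ 2) = 1 ∧ r = v ⬝ᵥ (X *ᵥ v)}

end SNL

open SNL Matrix

theorem statement_4 {n : ℕ} (hn : 2 ≤ n) (u w : Fin n → ℝ) :
    frobNormSq (delta (vecMulVec u w + vecMulVec w u))
      = 4 * frobInner (delta (vecMulVec u u)) (delta (vecMulVec w w)) ∧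
    frobNormSq (delta (vecMulVec u w + vecMulVec w u))
      ≤ 4 * frobInner (delta (vecMulVec u u)) (delta (vecMulVec w w)) := by
  have key : frobNormSq (delta (vecMulVec u w + vecMulVec w u))
      = 4 * frobInner (delta (vecMulVec u u)) (delta (vecMulVec w w)) := by
    simp only [frobNormSq, frobInner, delta, Matrix.add_apply, Matrix.of_apply,
      Matrix.vecMulVec_apply, Finset.mul_sum]
    refine Finset.sum_congr rfl fun i _ => Finset.sum_congr rfl fun j _ => ?_
    ring
  exact ⟨key, key.le⟩
end

section
/- Let n ≥ 2 and let X ∈ Cent(n) (not necessarily positive semidefinite) satisfy λ_max(X) > 0, where λ_max denotes the largest eigenvalue. Then λ_max(X) > λ_max(Γ(X)). -/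
open Matrix

open SNL Matrix

section AuxSNL

lemma aux_abs_le_one {n : ℕ} (v : Fin n → ℝ) (hv : (∑ i, v i ^ 2) = 1) (i : Fin n) :
    |v i| ≤ 1 := by
  have h1 : v i ^ 2 ≤ 1 := by
    rw [← hv]
    exact Finset.single_le_sum (f := fun i => v i ^ 2) (fun i _ => sq_nonneg _) (Finset.mem_univ i)
  nlinarith [abs_nonneg (v i), sq_abs (v i)]

lemma aux_rayleigh_bound {n : ℕ} (X : Matrix (Fin n) (Fin n) ℝ) (v : Fin n → ℝ)
    (hv : (∑ i, v i ^ 2) = 1) : v ⬝ᵥ (X *ᵥ v) ≤ ∑ i, ∑ j, |X i j| := by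
  have hvv : v ⬝ᵥ (X *ᵥ v) = ∑ i, ∑ j, v i * (X i j * v j) := by
    simp [dotProduct, Matrix.mulVec, Finset.mul_sum]
  rw [hvv]
  refine Finset.sum_le_sum fun i _ => Finset.sum_le_sum fun j _ => ?_
  have h1 := aux_abs_le_one v hv i
  have h2 := aux_abs_le_one v hv j
  calc v i * (X i j * v j) ≤ |v i * (X i j * v j)| := le_abs_self _
    _ = |X i j| * (|v i| * |v j|) := by rw [abs_mul, abs_mul]; ring
    _ ≤ |X i j| * 1 := by
        refine mul_le_mul_of_nonneg_left ?_ (abs_nonneg _)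
        calc |v i| * |v j| ≤ 1 * 1 := mul_le_mul h1 h2 (abs_nonneg _) zero_le_one
          _ = 1 := one_mul 1
    _ = |X i j| := mul_one _

lemma aux_bddAbove {n : ℕ} (X : Matrix (Fin n) (Fin n) ℝ) :
    BddAbove {r : ℝ | ∃ v : Fin n → ℝ, (∑ i, v i ^ 2) = 1 ∧ r = v ⬝ᵥ (X *ᵥ v)} := by
  refine ⟨∑ i, ∑ j, |X i j|, ?_⟩
  rintro r ⟨v, hv, rfl⟩
  exact aux_rayleigh_bound X v hv

lemma aux_le_lambdaMax {n : ℕ} (X : Matrix (Fin n) (Fin n) ℝ) (v : Fin n → ℝ)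
    (hv : (∑ i, v i ^ 2) = 1) : v ⬝ᵥ (X *ᵥ v) ≤ lambdaMax X :=
  le_csSup (aux_bddAbove X) ⟨v, hv, rfl⟩

lemma aux_diag_lt {n : ℕ} (X : Matrix (Fin n) (Fin n) ℝ)
    (hsymm : X.IsSymm) (hcent : X *ᵥ (fun _ => (1 : ℝ)) = 0)
    (hpos : 0 < lambdaMax X) (i : Fin n) : X i i < lambdaMax X := by
  by_cases h : ∀ j, j ≠ i → X i j = 0
  · have hrow : ∑ j, X i j * 1 = 0 := congrFun hcent i
    have hsum : ∑ j, X i j = X i i := by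
      rw [← Finset.sum_subset (Finset.subset_univ {i})]
      · simp
      · intro j _ hj
        simp only [Finset.mem_singleton] at hj
        exact h j hj
    have hzero : X i i = 0 := by rw [← hsum]; simpa using hrow
    rw [hzero]; exact hpos
  · push_neg at h
    obtain ⟨j, hji, hb⟩ := h
    set a := X i i with ha
    set b := X i j with hbdef
    set c := X j j with hc
    set t : ℝ := b / (1 + |c - a|) with ht
    have hd : (0:ℝ) < 1 + |c - a| := by positivity
    have hb2 : 0 < b ^ 2 := by
      have : 0 < |b| := abs_pos.2 hb
      nlinarith [sq_abs b]
    have hkey : 0 < 2 * t * b + t ^ 2 * (c - a) := by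
      have h1 : 2 * t * b + t ^ 2 * (c - a)
          = (b ^ 2 * (2 * (1 + |c - a|) + (c - a))) / (1 + |c - a|) ^ 2 := by
        rw [ht]; field_simp
      rw [h1]
      apply div_pos _ (by positivity)
      have h2 : 0 < 2 * (1 + |c - a|) + (c - a) := by
        nlinarith [neg_abs_le (c - a), abs_nonneg (c - a)]
      exact mul_pos hb2 h2
    set s : ℝ := Real.sqrt (1 + t ^ 2) with hs
    have hs2 : s ^ 2 = 1 + t ^ 2 := Real.sq_sqrt (by positivity)
    have hspos : 0 < s := Real.sqrt_pos.2 (by positivity)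
    set u : Fin n → ℝ := fun k => (if k = i then 1 else 0) + t * (if k = j then 1 else 0) with hu
    set v : Fin n → ℝ := s⁻¹ • u with hv
    have husq : ∀ k, u k ^ 2 = (if k = i then 1 else 0) + t ^ 2 * (if k = j then 1 else 0) := by
      intro k
      by_cases hk : k = i
      · have hij : i ≠ j := fun hh => hji hh.symm
        simp [hu, hk, hij]
      · by_cases hk' : k = j
        · simp [hu, hk, hk', hji]
        · simp [hu, hk, hk']
    have hsumu : ∑ k, u k ^ 2 = 1 + t ^ 2 := by
      simp only [husq]
      rw [Finset.sum_add_distrib]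
      simp [Finset.sum_ite_eq', Finset.mul_sum]
    have hunit : ∑ k, v k ^ 2 = 1 := by
      have : ∀ k, v k ^ 2 = s⁻¹ ^ 2 * u k ^ 2 := by
        intro k; simp [hv, mul_pow]
      simp only [this]
      rw [← Finset.mul_sum, hsumu, ← hs2]
      field_simp
    have hXji : X j i = b := by
      have := congrFun (congrFun hsymm i) j
      simpa [Matrix.transpose_apply] using this
    have hray_u : u ⬝ᵥ (X *ᵥ u) = a + 2 * t * b + t ^ 2 * c := by
      have hXu : ∀ k, (X *ᵥ u) k = X k i + t * X k j := by
        intro k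
        simp [Matrix.mulVec, dotProduct, hu, mul_add, Finset.sum_add_distrib,
          Finset.mul_sum, mul_ite, mul_comm]
      simp only [dotProduct, hXu]
      have hterm : ∀ k, u k * (X k i + t * X k j)
          = (if k = i then 1 else 0) * (X k i + t * X k j)
            + t * ((if k = j then 1 else 0) * (X k i + t * X k j)) := by
        intro k; simp only [hu]; ring
      simp only [hterm]
      rw [Finset.sum_add_distrib, ← Finset.mul_sum]
      simp only [ite_mul, one_mul, zero_mul, Finset.sum_ite_eq, Finset.sum_ite_eq',
        Finset.mem_univ, if_true]
      rw [hXji, ← ha, ← hbdef, ← hc]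
      ring
    have hray : v ⬝ᵥ (X *ᵥ v) = (a + 2 * t * b + t ^ 2 * c) / (1 + t ^ 2) := by
      have h1 : v ⬝ᵥ (X *ᵥ v) = s⁻¹ * (s⁻¹ * (u ⬝ᵥ (X *ᵥ u))) := by
        rw [hv, Matrix.mulVec_smul, smul_dotProduct, dotProduct_smul]
        simp
      have hs0 : s ≠ 0 := ne_of_gt hspos
      rw [h1, hray_u, ← hs2, eq_div_iff (pow_ne_zero 2 hs0)]
      calc s⁻¹ * (s⁻¹ * (a + 2 * t * b + t ^ 2 * c)) * s ^ 2
          = (a + 2 * t * b + t ^ 2 * c) * (s⁻¹ * s) * (s⁻¹ * s) := by ring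
        _ = a + 2 * t * b + t ^ 2 * c := by rw [inv_mul_cancel₀ hs0]; ring
    have hgt : a < v ⬝ᵥ (X *ᵥ v) := by
      rw [hray, lt_div_iff₀ (by positivity)]
      nlinarith
    exact lt_of_lt_of_le hgt (aux_le_lambdaMax X v hunit)

end AuxSNL

theorem statement_5 {n : ℕ} (hn : 2 ≤ n) (X : Matrix (Fin n) (Fin n) ℝ)
    (hsymm : X.IsSymm) (hcent : X *ᵥ (fun _ => (1 : ℝ)) = 0)
    (hpos : 0 < lambdaMax X) :
    lambdaMax (Gamma X) < lambdaMax X := by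
  have hn0 : (0:ℝ) < (n:ℝ) := by
    have : 0 < n := lt_of_lt_of_le (by norm_num) hn
    exact_mod_cast this
  have hne : (Finset.univ : Finset (Fin n)).Nonempty := ⟨⟨0, by omega⟩, Finset.mem_univ _⟩
  set M := Finset.univ.sup' hne (fun i => X i i) with hM
  have hMlt : M < lambdaMax X := by
    rw [hM, Finset.sup'_lt_iff]
    exact fun i _ => aux_diag_lt X hsymm hcent hpos i
  set cc := max M 0 with hcc
  have hcclt : cc < lambdaMax X := max_lt hMlt hpos
  have hcc0 : (0:ℝ) ≤ cc := le_max_right _ _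
  have hle : lambdaMax (Gamma X) ≤ cc := by
    unfold lambdaMax
    apply Real.sSup_le _ hcc0
    rintro r ⟨v, hv, rfl⟩
    set S : ℝ := ∑ k, v k with hS
    set m : ℝ := (n:ℝ)⁻¹ * S with hm
    set w : Fin n → ℝ := fun k => v k - m with hw
    have hw_mul : (centering n) *ᵥ v = w := by
      funext k
      simp [centering, Matrix.sub_mulVec, Matrix.smul_mulVec, Matrix.mulVec,
        dotProduct, hw, hm, hS]
      rw [Finset.sum_congr rfl (fun x _ => by rw [sub_mul]), Finset.sum_sub_distrib,
        ← Finset.mul_sum]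
      congr 1
      simp [Matrix.one_apply, ite_mul, Finset.sum_ite_eq]
    have hJt : (centering n)ᵀ = centering n := by
      ext i j
      simp [centering, Matrix.one_apply, eq_comm]
    have hgam : v ⬝ᵥ (Gamma X *ᵥ v) = ∑ k, X k k * w k ^ 2 := by
      have h1 : Gamma X *ᵥ v = (centering n) *ᵥ (diagM X *ᵥ ((centering n) *ᵥ v)) := by
        simp [Gamma, Matrix.mul_assoc, Matrix.mulVec_mulVec]
      rw [h1, hw_mul, Matrix.dotProduct_mulVec, ← hJt, Matrix.vecMul_transpose, hw_mul]
      have hdiag : diagM X *ᵥ w = fun k => X k k * w k := by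
        funext k
        simp [diagM, Matrix.mulVec, dotProduct, Matrix.diagonal_apply, Finset.sum_ite_eq]
      rw [hdiag]
      simp only [dotProduct]
      exact Finset.sum_congr rfl fun k _ => by ring
    have hnm : (n:ℝ) * m = S := by
      rw [hm, ← mul_assoc, mul_inv_cancel₀ (ne_of_gt hn0), one_mul]
    have hwsum : ∑ k, w k ^ 2 ≤ 1 := by
      have hterm : ∀ k, w k ^ 2 = v k ^ 2 - 2 * m * v k + m ^ 2 := by
        intro k; simp only [hw]; ring
      have hexp : ∑ k, w k ^ 2 = (∑ k, v k ^ 2) - 2 * m * S + (n:ℝ) * m ^ 2 := by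
        simp only [hterm]
        rw [Finset.sum_add_distrib, Finset.sum_sub_distrib, ← Finset.mul_sum,
          Finset.sum_const, Finset.card_univ, Fintype.card_fin, nsmul_eq_mul, ← hS]
      have hms : 0 ≤ m * S := by
        have h2 : m * S = (n:ℝ)⁻¹ * S ^ 2 := by rw [hm]; ring
        rw [h2]; positivity
      have hnm2 : (n:ℝ) * m ^ 2 = m * S := by
        rw [pow_two, ← mul_assoc, hnm, mul_comm]
      rw [hexp, hv, hnm2]
      nlinarith
    have hbound : ∑ k, X k k * w k ^ 2 ≤ cc := by
      calc ∑ k, X k k * w k ^ 2 ≤ ∑ k, M * w k ^ 2 :=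
            Finset.sum_le_sum fun k _ =>
              mul_le_mul_of_nonneg_right (Finset.le_sup' (fun i => X i i) (Finset.mem_univ k))
                (sq_nonneg _)
        _ ≤ ∑ k, cc * w k ^ 2 :=
            Finset.sum_le_sum fun k _ =>
              mul_le_mul_of_nonneg_right (le_max_left _ _) (sq_nonneg _)
        _ = cc * ∑ k, w k ^ 2 := by rw [Finset.mul_sum]
        _ ≤ cc * 1 := mul_le_mul_of_nonneg_left hwsum hcc0
        _ = cc := mul_one _
    rw [hgam]
    exact hbound
  exact lt_of_le_of_lt hle hcclt
end

section
/- Let n ≥ 2, ℓ, k ≥ 1, Y ∈ ℝ^{n×ℓ}, and let Z ∈ ℝ^{n×k} satisfy the second-order inequality ⟨ŻŻᵀ, (Δ*∘Δ)(ZZᵀ − YYᵀ)⟩ + (1/2)·‖Δ(ŻZᵀ + ZŻᵀ)‖_F² ≥ 0 for every Ż ∈ ℝ^{n×k}. Then for every positive semidefinite S ∈ Sym(n) and every positive semidefinite T ∈ Sym(k): 0 ≤ tr(T)·⟨S, (Δ*∘Δ)(ZZᵀ − YYᵀ)⟩ + 2·⟨Δ(Z T Zᵀ), Δ(S)⟩.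 -/
open Matrix

open SNL Matrix

/-! The right-hand side is bilinear in `(S, T)`. Writing `S = ∑ᵢ uᵢuᵢᵀ` and `T = ∑ⱼ vⱼvⱼᵀ`,
it is the sum of its values on the rank-one pairs `(uᵢuᵢᵀ, vⱼvⱼᵀ)`, and on `(uuᵀ, vvᵀ)` it equals the second-order expression at the direction
`Ż = u vᵀ`, which is nonnegative by hypothesis. -/

namespace SNL

variable {n m k : ℕ}

lemma frobInner_add_left (X X' Y : Matrix (Fin n) (Fin m) ℝ) :
    frobInner (X + X') Y = frobInner X Y + frobInner X' Y := by
  simp [frobInner, add_mul, Finset.sum_add_distrib]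

lemma frobInner_smul_left (c : ℝ) (X Y : Matrix (Fin n) (Fin m) ℝ) :
    frobInner (c • X) Y = c * frobInner X Y := by
  simp [frobInner, Finset.mul_sum, mul_assoc]

lemma frobInner_add_right (X Y Y' : Matrix (Fin n) (Fin m) ℝ) :
    frobInner X (Y + Y') = frobInner X Y + frobInner X Y' := by
  simp [frobInner, mul_add, Finset.sum_add_distrib]

lemma frobInner_smul_right (c : ℝ) (X Y : Matrix (Fin n) (Fin m) ℝ) :
    frobInner X (c • Y) = c * frobInner X Y := by
  simp [frobInner, Finset.mul_sum, mul_left_comm]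

lemma delta_add (X X' : Matrix (Fin n) (Fin n) ℝ) : delta (X + X') = delta X + delta X' := by
  ext i j
  simp only [delta, of_apply, Matrix.add_apply]
  ring

lemma delta_smul (c : ℝ) (X : Matrix (Fin n) (Fin n) ℝ) : delta (c • X) = c • delta X := by
  ext i j
  simp only [delta, of_apply, Matrix.smul_apply, smul_eq_mul]
  ring

lemma delta_vecMulVec_self (x : Fin n → ℝ) (i j : Fin n) :
    delta (vecMulVec x x) i j = (x i - x j) ^ 2 / 2 := by
  simp only [delta, of_apply, vecMulVec_apply]
  ring

lemma delta_vecMulVec_add_vecMulVec (x y : Fin n → ℝ) (i j : Fin n) :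
    delta (vecMulVec x y + vecMulVec y x) i j = (x i - x j) * (y i - y j) := by
  simp only [delta, of_apply, Matrix.add_apply, vecMulVec_apply]
  ring

noncomputable def secondOrderForm (M : Matrix (Fin n) (Fin n) ℝ)
    (Z : Matrix (Fin n) (Fin k) ℝ) :
    Matrix (Fin n) (Fin n) ℝ →ₗ[ℝ] Matrix (Fin k) (Fin k) ℝ →ₗ[ℝ] ℝ :=
  LinearMap.mk₂ ℝ
    (fun S T => trace T * frobInner S M + 2 * frobInner (delta (Z * T * Zᵀ)) (delta S))
    (fun S S' T => by simp only [delta_add, frobInner_add_left, frobInner_add_right]; ring)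
    (fun c S T => by simp only [delta_smul, frobInner_smul_left, frobInner_smul_right]; ring)
    (fun S T T' => by
      simp only [trace_add, Matrix.mul_add, Matrix.add_mul, delta_add, frobInner_add_left]; ring)
    (fun c S T => by
      simp only [trace_smul, Matrix.mul_smul, Matrix.smul_mul, delta_smul, frobInner_smul_left,
        smul_eq_mul]
      ring)

lemma secondOrderForm_vecMulVec (M : Matrix (Fin n) (Fin n) ℝ)
    (Z : Matrix (Fin n) (Fin k) ℝ) (u : Fin n → ℝ) (v : Fin k → ℝ) :
    secondOrderForm M Z (vecMulVec u u) (vecMulVec v v) =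
      frobInner (vecMulVec u v * (vecMulVec u v)ᵀ) M
        + (1 / 2) * frobNormSq (delta (vecMulVec u v * Zᵀ + Z * (vecMulVec u v)ᵀ)) := by
  set w := Z *ᵥ v
  have hWW : vecMulVec u v * (vecMulVec u v)ᵀ = (v ⬝ᵥ v) • vecMulVec u u := by
    rw [transpose_vecMulVec, vecMulVec_mul_vecMulVec, vecMulVec_smul]
  have hZTZ : Z * vecMulVec v v * Zᵀ = vecMulVec w w := by
    rw [mul_vecMulVec, vecMulVec_mul, vecMul_transpose]
  have hsym : vecMulVec u v * Zᵀ + Z * (vecMulVec u v)ᵀ = vecMulVec u w + vecMulVec w u := by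
    rw [vecMulVec_mul, vecMul_transpose, transpose_vecMulVec, mul_vecMulVec]
  simp only [secondOrderForm, LinearMap.mk₂_apply, hWW, hZTZ, hsym, trace_vecMulVec,
    frobInner_smul_left]
  congr 1
  simp only [frobNormSq, frobInner, delta_vecMulVec_self, delta_vecMulVec_add_vecMulVec,
    Finset.mul_sum]
  exact Finset.sum_congr rfl fun i _ => Finset.sum_congr rfl fun j _ => by ring

end SNL

theorem statement_6_general {n ℓ k : ℕ}
    (Y : Matrix (Fin n) (Fin ℓ) ℝ) (Z : Matrix (Fin n) (Fin k) ℝ)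
    (h2 : ∀ W : Matrix (Fin n) (Fin k) ℝ,
      0 ≤ frobInner (W * Wᵀ) (deltaStar (delta (Z * Zᵀ - Y * Yᵀ)))
          + (1 / 2) * frobNormSq (delta (W * Zᵀ + Z * Wᵀ)))
    (S : Matrix (Fin n) (Fin n) ℝ) (hS : S.PosSemidef)
    (T : Matrix (Fin k) (Fin k) ℝ) (hT : T.PosSemidef) :
    0 ≤ Matrix.trace T * frobInner S (deltaStar (delta (Z * Zᵀ - Y * Yᵀ)))
        + 2 * frobInner (delta (Z * T * Zᵀ)) (delta S) := by
  obtain ⟨p, a, rfl⟩ := posSemidef_iff_eq_sum_vecMulVec.mp hS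
  obtain ⟨q, b, rfl⟩ := posSemidef_iff_eq_sum_vecMulVec.mp hT
  change 0 ≤ secondOrderForm _ Z _ _
  simp only [star_trivial, map_sum, LinearMap.sum_apply, secondOrderForm_vecMulVec]
  exact Finset.sum_nonneg fun i _ => Finset.sum_nonneg fun j _ => h2 _

theorem statement_6 {n ℓ k : ℕ} (hn : 2 ≤ n) (hℓ : 1 ≤ ℓ) (hk : 1 ≤ k)
    (Y : Matrix (Fin n) (Fin ℓ) ℝ) (Z : Matrix (Fin n) (Fin k) ℝ)
    (h2 : ∀ W : Matrix (Fin n) (Fin k) ℝ,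
      0 ≤ frobInner (W * Wᵀ) (deltaStar (delta (Z * Zᵀ - Y * Yᵀ)))
          + (1 / 2) * frobNormSq (delta (W * Zᵀ + Z * Wᵀ)))
    (S : Matrix (Fin n) (Fin n) ℝ) (hS : S.PosSemidef)
    (T : Matrix (Fin k) (Fin k) ℝ) (hT : T.PosSemidef) :
    0 ≤ Matrix.trace T * frobInner S (deltaStar (delta (Z * Zᵀ - Y * Yᵀ)))
        + 2 * frobInner (delta (Z * T * Zᵀ)) (delta S) :=
  statement_6_general Y Z h2 S hS T hT
end

section
/- Let n ≥ 2, ℓ, k ≥ 1, Y ∈ ℝ^{n×ℓ}, and let Z ∈ ℝ^{n×k} be a second-order critical point of the complete-graph SNL cost g(Z) = ‖Δ(ZZᵀ − YYᵀ)‖_F². If rank(Z) < k, then g(Z) = 0 (i.e., Z is a global minimizer of g). -/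
open Matrix

open SNL Matrix

lemma frobNormSq_nonneg' {n m : ℕ} (X : Matrix (Fin n) (Fin m) ℝ) : 0 ≤ frobNormSq X := by
  unfold frobNormSq frobInner
  apply Finset.sum_nonneg; intro i _
  exact Finset.sum_nonneg fun j _ => mul_self_nonneg _

lemma frobInner_sub' {n m : ℕ} (A B C : Matrix (Fin n) (Fin m) ℝ) :
    frobInner A (B - C) = frobInner A B - frobInner A C := by
  simp [frobInner, Matrix.sub_apply, mul_sub, Finset.sum_sub_distrib]

lemma adj' {n : ℕ} (H X : Matrix (Fin n) (Fin n) ℝ) (hH : Hᵀ = H) :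
    frobInner (deltaStar H) X = frobInner H (delta X) := by
  have key : (∑ i, ∑ j, H i j * X j j) = ∑ i, ∑ j, H i j * X i i := by
    rw [Finset.sum_comm]
    refine Finset.sum_congr rfl fun j _ => Finset.sum_congr rfl fun i _ => ?_
    have hsym : H j i = H i j := by
      rw [← congrFun (congrFun hH j) i, Matrix.transpose_apply]
    rw [hsym]
  have expand : ∀ i j : Fin n, H i j * ((X i i + X j j - 2 * X i j) / 2)
      = H i j * X i i / 2 + H i j * X j j / 2 - H i j * X i j := by intros; ring
  simp only [frobInner, deltaStar, delta, Matrix.sub_apply, Matrix.diagonal_apply,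
    Matrix.of_apply, sub_mul, ite_mul, zero_mul, Finset.sum_sub_distrib,
    Finset.sum_ite_eq, Finset.mem_univ, if_true, expand, Finset.sum_add_distrib,
    ← Finset.sum_div, Finset.sum_mul]
  rw [key]; ring

theorem statement_7 {n ℓ k : ℕ} (hn : 2 ≤ n) (hℓ : 1 ≤ ℓ) (hk : 1 ≤ k)
    (Y : Matrix (Fin n) (Fin ℓ) ℝ) (Z : Matrix (Fin n) (Fin k) ℝ)
    (hZ : IsSecondOrderCritical Y Z) (hrank : Z.rank < k) :
    snlCost Y Z = 0 := by
  set E : Matrix (Fin n) (Fin n) ℝ := Z * Zᵀ - Y * Yᵀ with hE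
  set M : Matrix (Fin n) (Fin n) ℝ := deltaStar (delta E) with hM
  -- kernel vector
  have hker : ∃ v : Fin k → ℝ, v ≠ 0 ∧ Z *ᵥ v = 0 := by
    have hrn := Z.mulVecLin.finrank_range_add_finrank_ker
    simp only [Module.finrank_fintype_fun_eq_card, Fintype.card_fin] at hrn
    have hkerne : LinearMap.ker Z.mulVecLin ≠ ⊥ := by
      intro h
      rw [h, finrank_bot] at hrn
      rw [Matrix.rank] at hrank
      omega
    obtain ⟨v, hv, hv0⟩ := Submodule.exists_mem_ne_zero_of_ne_bot hkerne
    exact ⟨v, hv0, hv⟩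
  obtain ⟨v, hv0, hZv⟩ := hker
  -- positive semidefiniteness of M
  have hPSD : ∀ u : Fin n → ℝ, 0 ≤ ∑ i, ∑ j, u i * u j * M i j := by
    intro u
    set W : Matrix (Fin n) (Fin k) ℝ := Matrix.of fun i j => u i * v j with hW
    have hWZ : W * Zᵀ = 0 := by
      ext i j
      simp only [Matrix.mul_apply, Matrix.transpose_apply, Matrix.of_apply, hW,
        Matrix.zero_apply]
      have : ∑ m, u i * v m * Z j m = u i * ∑ m, Z j m * v m := by
        rw [Finset.mul_sum]; exact Finset.sum_congr rfl fun m _ => by ring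
      rw [this]
      have : (Z *ᵥ v) j = 0 := by rw [hZv]; rfl
      rw [Matrix.mulVec, dotProduct] at this
      rw [this, mul_zero]
    have hZW : Z * Wᵀ = 0 := by
      have : Z * Wᵀ = (W * Zᵀ)ᵀ := by rw [Matrix.transpose_mul, Matrix.transpose_transpose]
      rw [this, hWZ, Matrix.transpose_zero]
    have h2 := hZ.2 W
    rw [hWZ, hZW] at h2
    have hd0 : delta (0 + 0 : Matrix (Fin n) (Fin n) ℝ) = 0 := by
      ext i j; simp [delta]
    rw [hd0] at h2
    have hn0 : frobNormSq (0 : Matrix (Fin n) (Fin n) ℝ) = 0 := by simp [frobNormSq, frobInner]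
    rw [hn0, mul_zero, add_zero] at h2
    -- h2 : 0 ≤ frobInner (W * Wᵀ) M
    have hWW : frobInner (W * Wᵀ) M = (∑ m, v m ^ 2) * ∑ i, ∑ j, u i * u j * M i j := by
      simp only [frobInner, Matrix.mul_apply, Matrix.transpose_apply, Matrix.of_apply, hW]
      rw [Finset.mul_sum]
      refine Finset.sum_congr rfl fun i _ => ?_
      rw [Finset.mul_sum]
      refine Finset.sum_congr rfl fun j _ => ?_
      have : ∑ m, u i * v m * (u j * v m) = (∑ m, v m ^ 2) * (u i * u j) := by
        rw [Finset.sum_mul]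
        exact Finset.sum_congr rfl fun m _ => by ring
      rw [this]; ring
    rw [hWW] at h2
    have hvpos : 0 < ∑ m, v m ^ 2 := by
      obtain ⟨i, hi⟩ := Function.ne_iff.mp hv0
      have h1 : 0 < v i ^ 2 := lt_of_le_of_ne (sq_nonneg _) (Ne.symm (pow_ne_zero 2 hi))
      have h2' : v i ^ 2 ≤ ∑ m, v m ^ 2 :=
        Finset.single_le_sum (fun m _ => sq_nonneg (v m)) (Finset.mem_univ i)
      linarith
    exact le_of_not_gt fun hq => absurd h2 (not_le.mpr (mul_neg_of_pos_of_neg hvpos hq))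
  -- symmetry facts
  have hEsym : Eᵀ = E := by
    rw [hE, Matrix.transpose_sub, Matrix.transpose_mul, Matrix.transpose_mul,
      Matrix.transpose_transpose, Matrix.transpose_transpose]
  have hdsym : (delta E)ᵀ = delta E := by
    ext i j
    simp only [Matrix.transpose_apply, delta, Matrix.of_apply]
    have : E j i = E i j := by rw [← congrFun (congrFun hEsym j) i, Matrix.transpose_apply]
    rw [this]; ring
  -- first order: frobInner M (Z*Zᵀ) = 0
  have hMZ : ∀ i m, ∑ j, M i j * Z j m = 0 := by
    intro i m
    have := congrFun (congrFun hZ.1 i) m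
    rw [Matrix.mul_apply] at this
    simpa using this
  have hMZZ : frobInner M (Z * Zᵀ) = 0 := by
    have key : frobInner M (Z * Zᵀ) = ∑ i, ∑ m, ∑ j, Z i m * (M i j * Z j m) := by
      simp only [frobInner, Matrix.mul_apply, Matrix.transpose_apply, Finset.mul_sum]
      refine Finset.sum_congr rfl fun i _ => ?_
      rw [Finset.sum_comm]
      refine Finset.sum_congr rfl fun m _ => Finset.sum_congr rfl fun j _ => by ring
    rw [key]
    refine Finset.sum_eq_zero fun i _ => Finset.sum_eq_zero fun m _ => ?_
    rw [← Finset.mul_sum, hMZ i m, mul_zero]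
  -- frobInner M (Y * Yᵀ) nonneg
  have hMYY : 0 ≤ frobInner M (Y * Yᵀ) := by
    have key : frobInner M (Y * Yᵀ) = ∑ c, ∑ i, ∑ j, Y i c * Y j c * M i j := by
      simp only [frobInner, Matrix.mul_apply, Matrix.transpose_apply, Finset.mul_sum]
      have A : ∀ i : Fin n, (∑ j, ∑ c, M i j * (Y i c * Y j c))
          = ∑ c, ∑ j, Y i c * Y j c * M i j := fun i => by
        rw [Finset.sum_comm]
        exact Finset.sum_congr rfl fun c _ => Finset.sum_congr rfl fun j _ => by ring
      simp only [A]
      exact Finset.sum_comm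
    rw [key]
    exact Finset.sum_nonneg fun c _ => hPSD fun x => Y x c
  -- adjoint identity
  have hadj : frobInner M E = snlCost Y Z := by
    rw [hM, adj' (delta E) E hdsym]
    rfl
  have hsplit : frobInner M E = frobInner M (Z * Zᵀ) - frobInner M (Y * Yᵀ) := by
    rw [hE]; exact frobInner_sub' M _ _
  have hcost_nonneg : 0 ≤ snlCost Y Z := frobNormSq_nonneg' _
  have : snlCost Y Z = - frobInner M (Y * Yᵀ) := by
    rw [← hadj, hsplit, hMZZ]; ring
  linarith
end

section
/- Let n ≥ 2, ℓ, k ≥ 1, let Y ∈ ℝ^{n×ℓ} satisfy Yᵀ𝟙 = 0, and let Z ∈ ℝ^{n×k} satisfy Zᵀ𝟙 = 0, rank(Z) = k, and the first-order criticality condition (Δ*∘Δ)(ZZᵀ − YYᵀ)·Z = 0. Then the matrix C = (Δ*∘Δ)(ZZᵀ − YYᵀ) is negative semidefinite. -/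
open Matrix

open SNL Matrix

/-!
Write `C = Δ*(Δ X)` with `X = ZZᵀ - YYᵀ`. It is symmetric with `C𝟙 = 0`, and criticality says
`CZ = 0`, so an eigenvector `v` of `C` with eigenvalue `μ ≠ 0` is orthogonal to `𝟙` and to the
columns of `Z`. For such `v`, `vᵀ(Δ X)v = -vᵀXv = ‖Yᵀv‖² ≥ 0`, hence `vᵀCv ≤ ∑ᵢ Cᵢᵢ vᵢ²`.
If the top eigenvalue `μ` of `C` were positive, then, as `Cᵢᵢ ≤ μ`, this inequality forces
`(μI - C)ᵢᵢ = 0` for some `i` in the support of its eigenvector; the column `i` of the positive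
semidefinite matrix `μI - C` then vanishes, which is impossible since its row sums are `μ`.
-/

open scoped MatrixOrder

namespace Matrix

variable {ι : Type*}

theorem isSymm_mul_transpose_sub_mul_transpose {κ ν : Type*} [Fintype κ] [Fintype ν]
    (Y : Matrix ι ν ℝ) (Z : Matrix ι κ ℝ) : (Z * Zᵀ - Y * Yᵀ).IsSymm := by
  simp [IsSymm, transpose_mul]

variable [Fintype ι]

theorem IsSymm.dotProduct_eq_zero_of_mulVec_eq_smul {C : Matrix ι ι ℝ} (hC : C.IsSymm)
    {μ : ℝ} {v z : ι → ℝ} (hv : C *ᵥ v = μ • v) (hμ : μ ≠ 0) (hz : C *ᵥ z = 0) :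
    z ⬝ᵥ v = 0 := by
  have : μ • (z ⬝ᵥ v) = 0 := by
    rw [← dotProduct_smul, ← hv, dotProduct_mulVec, ← mulVec_transpose, hC.eq, hz,
      zero_dotProduct]
  exact (smul_eq_zero.mp this).resolve_left hμ

theorem IsSymm.transpose_mulVec_eq_zero_of_mulVec_eq_smul {κ : Type*} {C : Matrix ι ι ℝ}
    (hC : C.IsSymm) {μ : ℝ} {v : ι → ℝ} (hv : C *ᵥ v = μ • v) (hμ : μ ≠ 0)
    {Z : Matrix ι κ ℝ} (hZ : C * Z = 0) : Zᵀ *ᵥ v = 0 := by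
  ext j
  exact hC.dotProduct_eq_zero_of_mulVec_eq_smul hv hμ (funext fun i => congrFun (congrFun hZ i) j)

theorem dotProduct_mul_transpose_sub_mulVec_nonpos {κ ν : Type*} [Fintype κ] [Fintype ν]
    (Y : Matrix ι ν ℝ) (Z : Matrix ι κ ℝ) {v : ι → ℝ} (hv : Zᵀ *ᵥ v = 0) :
    v ⬝ᵥ ((Z * Zᵀ - Y * Yᵀ) *ᵥ v) ≤ 0 := by
  rw [sub_mulVec, ← mulVec_mulVec, hv, mulVec_zero, zero_sub, dotProduct_neg, neg_nonpos,
    ← mulVec_mulVec, dotProduct_mulVec, ← mulVec_transpose]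
  exact Finset.sum_nonneg fun i _ => mul_self_nonneg _

variable [DecidableEq ι]

theorem PosSemidef.col_eq_zero_of_apply_self_eq_zero {M : Matrix ι ι ℝ} (hM : M.PosSemidef)
    {i : ι} (hi : M i i = 0) : M.col i = 0 := by
  have := (hM.dotProduct_mulVec_zero_iff (Pi.single i 1)).mp (by simp [hi])
  simpa [mulVec_single] using this

theorem eigenvalue_eq_zero_of_posSemidef_smul_one_sub {C : Matrix ι ι ℝ} {μ : ℝ} {v : ι → ℝ}
    (hC : (μ • 1 - C).PosSemidef) (hrow : C *ᵥ 1 = 0) (hv0 : v ≠ 0) (hv : C *ᵥ v = μ • v)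
    (hdiag : v ⬝ᵥ (C *ᵥ v) ≤ ∑ i, C i i * v i ^ 2) : μ = 0 := by
  set M := μ • 1 - C
  have hM_nonneg (i : ι) : 0 ≤ M i i * v i ^ 2 := mul_nonneg hC.diag_nonneg (sq_nonneg _)
  have hM_sum : ∑ i, M i i * v i ^ 2 ≤ 0 := by
    simp only [M, sub_apply, smul_apply, one_apply_eq, smul_eq_mul, mul_one, sub_mul,
      Finset.sum_sub_distrib]
    rw [hv, dotProduct_smul] at hdiag
    simpa [dotProduct, sq, Finset.mul_sum, mul_assoc] using hdiag
  obtain ⟨i, hi⟩ : ∃ i, v i ≠ 0 := Function.ne_iff.mp hv0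
  have hMii : M i i = 0 := by
    have := (Finset.sum_eq_zero_iff_of_nonneg fun j _ => hM_nonneg j).mp
      (hM_sum.antisymm (Finset.sum_nonneg fun j _ => hM_nonneg j)) i (Finset.mem_univ i)
    exact (mul_eq_zero.mp this).resolve_right (pow_ne_zero 2 hi)
  calc μ = (M *ᵥ 1) i := by simp [M, sub_mulVec, hrow, smul_mulVec]
    _ = ∑ j, M.col i j := by simp [mulVec, dotProduct, ← hC.1.apply i]
    _ = 0 := by rw [hC.col_eq_zero_of_apply_self_eq_zero hMii]; simp

theorem IsHermitian.nonpos_of_dotProduct_mulVec_le_diag {C : Matrix ι ι ℝ} (hC : C.IsHermitian)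
    (hrow : C *ᵥ 1 = 0)
    (hdiag : ∀ (μ : ℝ) (v : ι → ℝ), 0 < μ → C *ᵥ v = μ • v →
      v ⬝ᵥ (C *ᵥ v) ≤ ∑ i, C i i * v i ^ 2) :
    C ≤ 0 := by
  rw [← map_zero (algebraMap ℝ (Matrix ι ι ℝ)), le_algebraMap_iff_spectrum_le hC,
    hC.spectrum_real_eq_range_eigenvalues, Set.forall_mem_range]
  by_contra! ⟨j, hj⟩
  have : Nonempty ι := ⟨j⟩
  obtain ⟨i, hi⟩ := Finite.exists_max hC.eigenvalues
  have htop : C ≤ algebraMap ℝ _ (hC.eigenvalues i) := by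
    rw [le_algebraMap_iff_spectrum_le hC, hC.spectrum_real_eq_range_eigenvalues,
      Set.forall_mem_range]
    exact hi
  rw [le_iff, Algebra.algebraMap_eq_smul_one] at htop
  have hpos : 0 < hC.eigenvalues i := hj.trans_le (hi j)
  have hv := hC.mulVec_eigenvectorBasis i
  refine hpos.ne' (eigenvalue_eq_zero_of_posSemidef_smul_one_sub htop hrow ?_ hv
    (hdiag _ _ hpos hv))
  simpa using hC.eigenvectorBasis.orthonormal.ne_zero i

end Matrix

namespace SNL

variable {n : ℕ}

@[simp]
theorem delta_apply_self (X : Matrix (Fin n) (Fin n) ℝ) (i : Fin n) : delta X i i = 0 := by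
  simp only [delta, of_apply]
  ring

theorem isSymm_delta {X : Matrix (Fin n) (Fin n) ℝ} (hX : X.IsSymm) : (delta X).IsSymm := by
  ext i j
  simp only [transpose_apply, delta, of_apply, hX.apply i j]
  ring

theorem isSymm_deltaStar {H : Matrix (Fin n) (Fin n) ℝ} (hH : H.IsSymm) :
    (deltaStar H).IsSymm :=
  (isSymm_diagonal _).sub hH

theorem deltaStar_apply_self (H : Matrix (Fin n) (Fin n) ℝ) (i : Fin n) :
    deltaStar H i i = ∑ k, H i k - H i i := by
  simp [deltaStar]

theorem deltaStar_mulVec_one (H : Matrix (Fin n) (Fin n) ℝ) : deltaStar H *ᵥ 1 = 0 := by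
  rw [deltaStar, sub_mulVec, sub_eq_zero]
  ext i
  rw [mulVec_diagonal]
  simp [mulVec, dotProduct]

theorem dotProduct_deltaStar_mulVec (H : Matrix (Fin n) (Fin n) ℝ) (v : Fin n → ℝ) :
    v ⬝ᵥ (deltaStar H *ᵥ v) = ∑ i, (∑ k, H i k) * v i ^ 2 - v ⬝ᵥ (H *ᵥ v) := by
  simp only [deltaStar, sub_mulVec, dotProduct_sub]
  congr 1
  exact Finset.sum_congr rfl fun i _ => by rw [mulVec_diagonal]; ring

theorem dotProduct_delta_mulVec (X : Matrix (Fin n) (Fin n) ℝ) (v : Fin n → ℝ) :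
    v ⬝ᵥ (delta X *ᵥ v) = (∑ i, v i) * (∑ i, X i i * v i) - v ⬝ᵥ (X *ᵥ v) := by
  have hswap : ∑ i, ∑ j, v i * X i i * v j = ∑ i, ∑ j, v i * X j j * v j := by
    rw [Finset.sum_comm]
    exact Finset.sum_congr rfl fun i _ => Finset.sum_congr rfl fun j _ => by ring
  calc v ⬝ᵥ (delta X *ᵥ v)
      = ((∑ i, ∑ j, v i * X i i * v j) + ∑ i, ∑ j, v i * X j j * v j) / 2
          - ∑ i, ∑ j, v i * X i j * v j := by
        simp only [delta, dotProduct, mulVec, of_apply, Finset.mul_sum, ← Finset.sum_add_distrib,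
          Finset.sum_div, ← Finset.sum_sub_distrib]
        exact Finset.sum_congr rfl fun i _ => Finset.sum_congr rfl fun j _ => by ring
    _ = (∑ i, v i) * (∑ i, X i i * v i) - v ⬝ᵥ (X *ᵥ v) := by
        rw [hswap, add_self_div_two, Finset.sum_mul_sum]
        simp only [dotProduct, mulVec, Finset.mul_sum]
        congr 1 <;> exact Finset.sum_congr rfl fun i _ => Finset.sum_congr rfl fun j _ => by ring

variable {ℓ k : ℕ}

theorem isSymm_deltaStar_delta_mul_transpose_sub (Y : Matrix (Fin n) (Fin ℓ) ℝ)
    (Z : Matrix (Fin n) (Fin k) ℝ) : (deltaStar (delta (Z * Zᵀ - Y * Yᵀ))).IsSymm :=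
  isSymm_deltaStar (isSymm_delta (isSymm_mul_transpose_sub_mul_transpose Y Z))

theorem IsFirstOrderCritical.dotProduct_mulVec_le_diag {Y : Matrix (Fin n) (Fin ℓ) ℝ}
    {Z : Matrix (Fin n) (Fin k) ℝ} (h : IsFirstOrderCritical Y Z) {μ : ℝ}
    {v : Fin n → ℝ} (hμ : μ ≠ 0) (hv : deltaStar (delta (Z * Zᵀ - Y * Yᵀ)) *ᵥ v = μ • v) :
    v ⬝ᵥ (deltaStar (delta (Z * Zᵀ - Y * Yᵀ)) *ᵥ v)
      ≤ ∑ i, deltaStar (delta (Z * Zᵀ - Y * Yᵀ)) i i * v i ^ 2 := by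
  have hC := isSymm_deltaStar_delta_mul_transpose_sub Y Z
  have hsum : ∑ i, v i = 0 := by
    simpa [dotProduct] using hC.dotProduct_eq_zero_of_mulVec_eq_smul hv hμ (deltaStar_mulVec_one _)
  have hXv := dotProduct_mul_transpose_sub_mulVec_nonpos Y Z
    (hC.transpose_mulVec_eq_zero_of_mulVec_eq_smul hv hμ h)
  rw [dotProduct_deltaStar_mulVec, dotProduct_delta_mulVec, hsum, zero_mul, zero_sub]
  simp only [deltaStar_apply_self, delta_apply_self, sub_zero]
  linarith

end SNL

theorem statement_8_general {n ℓ k : ℕ}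
    (Y : Matrix (Fin n) (Fin ℓ) ℝ)
    (Z : Matrix (Fin n) (Fin k) ℝ)
    (h1 : IsFirstOrderCritical Y Z) :
    (-(deltaStar (delta (Z * Zᵀ - Y * Yᵀ)))).PosSemidef := by
  have hC : (deltaStar (delta (Z * Zᵀ - Y * Yᵀ))).IsHermitian :=
    isHermitian_iff_isSymm.mpr (isSymm_deltaStar_delta_mul_transpose_sub Y Z)
  rw [← zero_sub, ← le_iff]
  exact hC.nonpos_of_dotProduct_mulVec_le_diag (deltaStar_mulVec_one _)
    fun _ _ hμ hv => h1.dotProduct_mulVec_le_diag hμ.ne' hv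

theorem statement_8 {n ℓ k : ℕ} (hn : 2 ≤ n) (hℓ : 1 ≤ ℓ) (hk : 1 ≤ k)
    (Y : Matrix (Fin n) (Fin ℓ) ℝ) (hY : Yᵀ *ᵥ (fun _ => (1 : ℝ)) = 0)
    (Z : Matrix (Fin n) (Fin k) ℝ) (hZc : Zᵀ *ᵥ (fun _ => (1 : ℝ)) = 0)
    (hZrank : Z.rank = k)
    (h1 : IsFirstOrderCritical Y Z) :
    (-(deltaStar (delta (Z * Zᵀ - Y * Yᵀ)))).PosSemidef :=
  statement_8_general Y Z h1
end

section
/- Let M ∈ Sym(k) have eigenvalues m₁ ≤ m₂ ≤ … ≤ m_k, and assume that r of them are nonpositive, i.e., m_r ≤ 0. Let S ∈ ℝ^{k×d} have orthonormal columns spanning a d-dimensional subspace 𝒮 of ℝ^k, and let M̃ = SᵀMS have eigenvalues m̃₁ ≤ m̃₂ ≤ … ≤ m̃_d. If r − k + d ≥ 1, then m̃₁ ≤ m̃₂ ≤ … ≤ m̃_{r−k+d} ≤ m_r ≤ 0. Moreover, if in addition m̃₁ = 0, then dim(𝒮 ∩ ker(M)) ≥ r − k + d. -/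
/-!
Both parts are Courant–Fischer arguments for the quadratic form `x ↦ x ⬝ᵥ M x`. Let `W` be the
span of the eigenvectors of `M` for `m₁, …, m_r`, on which the form is at most `m_r ‖x‖²`. For
`i < r + d - k`, the image under `S` of the span of the eigenvectors of `M̃` for `m̃ᵢ, …, m̃_d`
has dimension `d - i`, on which the form is at least `m̃ᵢ ‖x‖²`; the two dimensions add up to more
than `k`, so the subspaces share a nonzero vector and `m̃ᵢ ≤ m_r`. If `m̃₁ = 0` then `M̃` is
positive semidefinite, so the form is nonnegative on `𝒮`, while on `W` it equals `∑ mⱼ cⱼ²` with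
all `mⱼ ≤ 0`; hence on `𝒮 ∩ W` every `mⱼ cⱼ` vanishes, i.e. `𝒮 ∩ W ⊆ ker M`, and
`dim (𝒮 ∩ W) ≥ d + r - k`.
-/

open Matrix Module Submodule

section Compression

variable {R n p : Type*} [CommSemiring R] [Fintype n] [Fintype p] (S : Matrix n p R)

theorem Matrix.mulVec_dotProduct_eq_dotProduct_transpose_mulVec (a : p → R) (y : n → R) :
    (S *ᵥ a) ⬝ᵥ y = a ⬝ᵥ (Sᵀ *ᵥ y) := by
  rw [dotProduct_mulVec, vecMul_transpose]

theorem Matrix.mulVec_dotProduct_mulVec_mulVec (M : Matrix n n R) (a : p → R) :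
    (S *ᵥ a) ⬝ᵥ (M *ᵥ (S *ᵥ a)) = a ⬝ᵥ ((Sᵀ * M * S) *ᵥ a) := by
  rw [mulVec_dotProduct_eq_dotProduct_transpose_mulVec, mulVec_mulVec, mulVec_mulVec,
    Matrix.mul_assoc]

variable {S} [DecidableEq p]

theorem Matrix.mulVec_dotProduct_mulVec_of_transpose_mul_self (hS : Sᵀ * S = 1) (a b : p → R) :
    (S *ᵥ a) ⬝ᵥ (S *ᵥ b) = a ⬝ᵥ b := by
  rw [mulVec_dotProduct_eq_dotProduct_transpose_mulVec, mulVec_mulVec, hS, one_mulVec]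

theorem Matrix.mulVec_injective_of_transpose_mul_self (hS : Sᵀ * S = 1) :
    Function.Injective (S *ᵥ ·) := fun a b h => by
  simpa only [mulVec_mulVec, hS, one_mulVec] using congrArg (Sᵀ *ᵥ ·) h

end Compression

theorem Submodule.finrank_add_finrank_le_finrank_inf_add {K V : Type*} [DivisionRing K]
    [AddCommGroup V] [Module K V] [FiniteDimensional K V] (s t : Submodule K V) :
    finrank K s + finrank K t ≤ finrank K ↥(s ⊓ t) + finrank K V := by
  have := (s ⊔ t).finrank_le
  rw [← finrank_sup_add_finrank_inf_eq]
  omega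

section DotProductOrthonormal

variable {n ι κ : Type*} [Fintype n] [DecidableEq ι]

def DotProductOrthonormal (v : ι → n → ℝ) : Prop :=
  ∀ i j, v i ⬝ᵥ v j = if i = j then 1 else 0

namespace DotProductOrthonormal

variable {v : ι → n → ℝ} {A : Matrix n n ℝ} {μ : ι → ℝ}

theorem comp [DecidableEq κ] (hv : DotProductOrthonormal v) {f : κ → ι}
    (hf : Function.Injective f) : DotProductOrthonormal (v ∘ f) := fun i j => by
  simp only [Function.comp_apply, hv (f i) (f j), hf.eq_iff]

theorem linearIndependent (hv : DotProductOrthonormal v) : LinearIndependent ℝ v := by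
  refine linearIndependent_iff'.mpr fun s g hg i hi => ?_
  simpa [dotProduct_sum, dotProduct_smul, hv i, hi] using congrArg (v i ⬝ᵥ ·) hg

theorem finrank_span_image (hv : DotProductOrthonormal v) (s : Finset ι) :
    finrank ℝ (span ℝ (v '' s)) = s.card := by
  rw [Set.image_eq_range]
  exact (finrank_span_eq_card (hv.comp Subtype.val_injective).linearIndependent).trans (by simp)

theorem sum_smul_dotProduct_sum_smul (hv : DotProductOrthonormal v) (s : Finset ι)
    (a b : ι → ℝ) : (∑ i ∈ s, a i • v i) ⬝ᵥ (∑ i ∈ s, b i • v i) = ∑ i ∈ s, a i * b i := by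
  simp only [sum_dotProduct, dotProduct_sum, smul_dotProduct, dotProduct_smul, hv _ _, smul_eq_mul,
    mul_ite, mul_one, mul_zero, Finset.sum_ite_eq']
  exact Finset.sum_congr rfl fun i hi => by rw [if_pos hi, mul_comm]

theorem sum_smul_dotProduct_mulVec_sum_smul (hv : DotProductOrthonormal v)
    (he : ∀ i, A *ᵥ v i = μ i • v i) (s : Finset ι) (c : ι → ℝ) :
    (∑ i ∈ s, c i • v i) ⬝ᵥ (A *ᵥ ∑ i ∈ s, c i • v i) = ∑ i ∈ s, μ i * c i ^ 2 := by
  simp only [mulVec_sum, mulVec_smul, he, smul_smul, hv.sum_smul_dotProduct_sum_smul]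
  exact Finset.sum_congr rfl fun i _ => by ring

theorem dotProduct_mulVec_le_of_mem_span (hv : DotProductOrthonormal v)
    (he : ∀ i, A *ᵥ v i = μ i • v i) {s : Finset ι} {c : ℝ} (hμ : ∀ i ∈ s, μ i ≤ c)
    {x : n → ℝ} (hx : x ∈ span ℝ (v '' s)) : x ⬝ᵥ (A *ᵥ x) ≤ c * (x ⬝ᵥ x) := by
  obtain ⟨b, rfl⟩ := (mem_span_image_finset_iff_exists_fun' ℝ).mp hx
  rw [hv.sum_smul_dotProduct_mulVec_sum_smul he, hv.sum_smul_dotProduct_sum_smul, Finset.mul_sum]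
  exact Finset.sum_le_sum fun i hi => by
    rw [← sq]
    exact mul_le_mul_of_nonneg_right (hμ i hi) (sq_nonneg _)

theorem mul_dotProduct_self_le_of_mem_span (hv : DotProductOrthonormal v)
    (he : ∀ i, A *ᵥ v i = μ i • v i) {s : Finset ι} {c : ℝ} (hμ : ∀ i ∈ s, c ≤ μ i)
    {x : n → ℝ} (hx : x ∈ span ℝ (v '' s)) : c * (x ⬝ᵥ x) ≤ x ⬝ᵥ (A *ᵥ x) := by
  obtain ⟨b, rfl⟩ := (mem_span_image_finset_iff_exists_fun' ℝ).mp hx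
  rw [hv.sum_smul_dotProduct_mulVec_sum_smul he, hv.sum_smul_dotProduct_sum_smul, Finset.mul_sum]
  exact Finset.sum_le_sum fun i hi => by
    rw [← sq]
    exact mul_le_mul_of_nonneg_right (hμ i hi) (sq_nonneg _)

theorem mul_dotProduct_self_le [Fintype ι] (hv : DotProductOrthonormal v)
    (he : ∀ i, A *ᵥ v i = μ i • v i) (hcard : Fintype.card ι = Fintype.card n) {c : ℝ}
    (hμ : ∀ i, c ≤ μ i) (x : n → ℝ) : c * (x ⬝ᵥ x) ≤ x ⬝ᵥ (A *ᵥ x) := by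
  have hspan : span ℝ (Set.range v) = ⊤ := hv.linearIndependent.span_eq_top_of_card_eq_finrank'
    (by rw [hcard, finrank_fintype_fun_eq_card])
  refine hv.mul_dotProduct_self_le_of_mem_span he (s := Finset.univ) (fun i _ => hμ i) ?_
  rw [Finset.coe_univ, Set.image_univ, hspan]
  exact mem_top

theorem mulVec_eq_zero_of_mem_span (hv : DotProductOrthonormal v)
    (he : ∀ i, A *ᵥ v i = μ i • v i) {s : Finset ι} (hμ : ∀ i ∈ s, μ i ≤ 0)
    {x : n → ℝ} (hx : x ∈ span ℝ (v '' s)) (hAx : 0 ≤ x ⬝ᵥ (A *ᵥ x)) : A *ᵥ x = 0 := by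
  obtain ⟨b, rfl⟩ := (mem_span_image_finset_iff_exists_fun' ℝ).mp hx
  rw [hv.sum_smul_dotProduct_mulVec_sum_smul he] at hAx
  have hterm : ∀ i ∈ s, μ i * b i ^ 2 ≤ 0 := fun i hi =>
    mul_nonpos_of_nonpos_of_nonneg (hμ i hi) (sq_nonneg _)
  have hzero := (Finset.sum_eq_zero_iff_of_nonpos hterm).mp
    (le_antisymm (Finset.sum_nonpos hterm) hAx)
  simp only [mulVec_sum, mulVec_smul, he, smul_smul]
  refine Finset.sum_eq_zero fun i hi => ?_
  have : b i * μ i = 0 := by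
    rcases mul_eq_zero.mp (hzero i hi) with h | h
    · rw [h, mul_zero]
    · rw [pow_eq_zero_iff two_ne_zero |>.mp h, zero_mul]
  rw [this, zero_smul]

end DotProductOrthonormal
end DotProductOrthonormal

theorem Matrix.le_of_rayleigh_bounds_on_submodules {n : Type*} [Fintype n]
    {A : Matrix n n ℝ} {V W : Submodule ℝ (n → ℝ)}
    (hVW : Fintype.card n < finrank ℝ V + finrank ℝ W) {a b : ℝ}
    (hV : ∀ x ∈ V, a * (x ⬝ᵥ x) ≤ x ⬝ᵥ (A *ᵥ x))
    (hW : ∀ x ∈ W, x ⬝ᵥ (A *ᵥ x) ≤ b * (x ⬝ᵥ x)) : a ≤ b := by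
  have hinf : V ⊓ W ≠ ⊥ := by
    rw [← one_le_finrank_iff]
    have := V.finrank_add_finrank_le_finrank_inf_add W
    rw [finrank_fintype_fun_eq_card] at this
    omega
  obtain ⟨x, ⟨hxV, hxW⟩, hx0⟩ := exists_mem_ne_zero_of_ne_bot hinf
  exact le_of_mul_le_mul_right ((hV x hxV).trans (hW x hxW))
    (by simpa using dotProduct_self_star_pos_iff.mpr hx0)

theorem statement_12 {k d : ℕ}
    (M : Matrix (Fin k) (Fin k) ℝ)
    -- sorted spectral decomposition of M
    (m : Fin k → ℝ) (w : Fin k → Fin k → ℝ)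
    (hmono : Monotone m)
    (horth : ∀ i j, w i ⬝ᵥ w j = if i = j then (1 : ℝ) else 0)
    (heig : ∀ i, M *ᵥ w i = m i • w i)
    -- r of the eigenvalues are nonpositive
    (r : ℕ) (hr1 : 1 ≤ r) (hrk : r ≤ k)
    (hmr : m ⟨r - 1, by omega⟩ ≤ 0)
    -- S has orthonormal columns spanning the subspace 𝒮
    (S : Matrix (Fin k) (Fin d) ℝ) (hS : Sᵀ * S = 1)
    -- sorted spectral decomposition of the compression M̃ = SᵀMS
    (m' : Fin d → ℝ) (w' : Fin d → Fin d → ℝ)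
    (hmono' : Monotone m')
    (horth' : ∀ i j, w' i ⬝ᵥ w' j = if i = j then (1 : ℝ) else 0)
    (heig' : ∀ i, (Sᵀ * M * S) *ᵥ w' i = m' i • w' i)
    (hrd : k < r + d) :
    (∀ i : Fin d, (i : ℕ) < r + d - k → m' i ≤ m ⟨r - 1, by omega⟩) ∧
    (m' ⟨0, by omega⟩ = 0 →
      r + d - k ≤ Module.finrank ℝ
        ↥(LinearMap.range (Matrix.mulVecLin S) ⊓ LinearMap.ker (Matrix.mulVecLin M))) := by
  set ρ : Fin k := ⟨r - 1, by omega⟩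
  have hw : DotProductOrthonormal w := horth
  have hw' : DotProductOrthonormal w' := horth'
  set W := span ℝ (w '' Finset.Iic ρ)
  have hWr : finrank ℝ W = r := by
    rw [hw.finrank_span_image, Fin.card_Iic]
    exact Nat.sub_add_cancel hr1
  have hMW : ∀ x ∈ W, x ⬝ᵥ (M *ᵥ x) ≤ m ρ * (x ⬝ᵥ x) := fun x hx =>
    hw.dotProduct_mulVec_le_of_mem_span heig (fun j hj => hmono (Finset.mem_Iic.mp hj)) hx
  have hSinj : Function.Injective (mulVecLin S) := mulVec_injective_of_transpose_mul_self hS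
  constructor
  · intro i hi
    set V := span ℝ (w' '' Finset.Ici i)
    refine le_of_rayleigh_bounds_on_submodules (V := V.map (mulVecLin S)) ?_ ?_ hMW
    · rw [← (equivMapOfInjective _ hSinj V).finrank_eq, hw'.finrank_span_image, Fin.card_Ici, hWr,
        Fintype.card_fin]
      omega
    · rintro _ ⟨y, hy, rfl⟩
      rw [mulVecLin_apply, mulVec_dotProduct_mulVec_of_transpose_mul_self hS,
        mulVec_dotProduct_mulVec_mulVec]
      exact hw'.mul_dotProduct_self_le_of_mem_span heig'
        (fun j hj => hmono' (Finset.mem_Ici.mp hj)) hy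
  · intro h0
    have hker : LinearMap.range (mulVecLin S) ⊓ W ≤ LinearMap.ker (mulVecLin M) := by
      rintro _ ⟨⟨y, rfl⟩, hyW⟩
      refine hw.mulVec_eq_zero_of_mem_span heig
        (fun j hj => (hmono (Finset.mem_Iic.mp hj)).trans hmr) hyW ?_
      rw [mulVecLin_apply, mulVec_dotProduct_mulVec_mulVec]
      simpa using hw'.mul_dotProduct_self_le heig' rfl
        (fun j => h0.symm.trans_le (hmono' (Nat.zero_le j))) y
    have := (LinearMap.range (mulVecLin S)).finrank_add_finrank_le_finrank_inf_add W
    rw [LinearMap.finrank_range_of_inj hSinj, hWr, finrank_fin_fun, finrank_fin_fun] at this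
    calc r + d - k ≤ finrank ℝ ↥(LinearMap.range (mulVecLin S) ⊓ W) := by omega
      _ ≤ _ := finrank_mono (le_inf inf_le_left hker)
end

section
/- Let n ≥ 2. For every X ∈ Cent(n): (i) (Δ*∘Δ)(X) = X + (n/2)·J·Diag(X)·J + (1/2)·tr(X)·J; and (ii) the map X ↦ X − J·Diag(X)·J on Cent(n) is a two-sided inverse of Δ*∘Δ on Cent(n), i.e., (Δ*∘Δ)(X − J·Diag(X)·J) = X and (Δ*∘Δ)(X) − J·Diag((Δ*∘Δ)(X))·J = X for all X ∈ Cent(n). -/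
open Matrix

open SNL Matrix

lemma cent_apply {n : ℕ} (i j : Fin n) :
    centering n i j = (if i = j then 1 else 0) - (n:ℝ)⁻¹ := by
  simp [centering, one_apply]

lemma JDJ_apply {n : ℕ} (Y : Matrix (Fin n) (Fin n) ℝ) (i j : Fin n) :
    (centering n * diagM Y * centering n) i j =
      (if i = j then Y i i else 0) - Y i i * (n:ℝ)⁻¹ - Y j j * (n:ℝ)⁻¹
        + (∑ k, Y k k) * (n:ℝ)⁻¹ * (n:ℝ)⁻¹ := by
  rw [Matrix.mul_apply]
  simp only [diagM, Matrix.mul_diagonal, cent_apply, sub_mul, mul_sub, ite_mul, one_mul,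
    zero_mul, mul_ite, mul_one, mul_zero, Finset.sum_sub_distrib, Finset.sum_ite_eq,
    Finset.sum_ite_eq', Finset.mem_univ, if_true, ← Finset.sum_mul, ← Finset.mul_sum]
  rcases eq_or_ne i j with h | h
  · subst h; ring
  · simp only [h, if_false]; ring

lemma dsd_apply {n : ℕ} (Y : Matrix (Fin n) (Fin n) ℝ) (hY : ∀ i, ∑ k, Y i k = 0)
    (i j : Fin n) :
    deltaStar (delta Y) i j =
      (if i = j then ((n:ℝ) * Y i i + ∑ k, Y k k) / 2 else 0)
        - (Y i i + Y j j - 2 * Y i j) / 2 := by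
  simp only [deltaStar, delta, Matrix.sub_apply, Matrix.diagonal_apply, Matrix.of_apply]
  congr 1
  split_ifs with h
  · have : ∑ k, (Y i i + Y k k - 2 * Y i k) / 2
        = (∑ k, (Y i i + Y k k - 2 * Y i k)) / 2 := by
      rw [Finset.sum_div]
    rw [this]
    have : ∑ k, (Y i i + Y k k - 2 * Y i k)
        = (n : ℝ) * Y i i + (∑ k, Y k k) - 2 * ∑ k, Y i k := by
      rw [Finset.sum_sub_distrib, Finset.sum_add_distrib, Finset.sum_const,
        Finset.card_univ, Fintype.card_fin, nsmul_eq_mul, ← Finset.mul_sum]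
    rw [this, hY i]
    ring
  · rfl

theorem statement_16 {n : ℕ} (hn : 2 ≤ n) (X : Matrix (Fin n) (Fin n) ℝ)
    (hsymm : X.IsSymm) (hcent : X *ᵥ (fun _ => (1 : ℝ)) = 0) :
    deltaStar (delta X)
      = X + ((n : ℝ) / 2) • (centering n * diagM X * centering n)
          + ((1 / 2) * Matrix.trace X) • centering n ∧
    deltaStar (delta (X - centering n * diagM X * centering n)) = X ∧
    deltaStar (delta X) - centering n * diagM (deltaStar (delta X)) * centering n = X := by
  have hn0 : (n : ℝ) ≠ 0 := by positivity
  have hrow : ∀ i, ∑ k, X i k = 0 := by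
    intro i
    have := congrFun hcent i
    simpa [Matrix.mulVec, dotProduct] using this
  have htr : Matrix.trace X = ∑ k, X k k := by simp [Matrix.trace, Matrix.diag]
  refine ⟨?_, ?_, ?_⟩
  · ext i j
    rw [dsd_apply X hrow]
    simp only [Matrix.add_apply, Matrix.smul_apply, JDJ_apply, cent_apply, smul_eq_mul, htr]
    split_ifs with h
    · subst h; field_simp; ring
    · field_simp; ring
  · have hJDJrow : ∀ i : Fin n, ∑ k, (centering n * diagM X * centering n) i k = 0 := by
      intro i
      simp only [JDJ_apply]
      rw [Finset.sum_add_distrib, Finset.sum_sub_distrib, Finset.sum_sub_distrib,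
        Finset.sum_ite_eq, Finset.sum_const, Finset.sum_const, ← Finset.sum_mul]
      simp only [Finset.mem_univ, if_true, Finset.card_univ, Fintype.card_fin, nsmul_eq_mul]
      field_simp
      ring
    have hrow2 : ∀ i, ∑ k, (X - centering n * diagM X * centering n) i k = 0 := by
      intro i
      simp only [Matrix.sub_apply, Finset.sum_sub_distrib, hrow i, hJDJrow i, sub_zero]
    have hdiag2 : ∀ k : Fin n, (X - centering n * diagM X * centering n) k k
        = 2 * X k k * (n:ℝ)⁻¹ - (∑ l, X l l) * (n:ℝ)⁻¹ * (n:ℝ)⁻¹ := by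
      intro k
      simp [Matrix.sub_apply, JDJ_apply]
      ring
    have hTr2 : ∑ k, (X - centering n * diagM X * centering n) k k
        = (∑ l, X l l) * (n:ℝ)⁻¹ := by
      rw [Finset.sum_congr rfl fun k _ => hdiag2 k]
      rw [Finset.sum_sub_distrib, Finset.sum_const, Finset.card_univ, Fintype.card_fin,
        nsmul_eq_mul]
      simp only [← Finset.sum_mul, ← Finset.mul_sum]
      field_simp
      ring
    ext i j
    rw [dsd_apply _ hrow2]
    rw [hTr2]
    simp only [hdiag2]
    simp only [Matrix.sub_apply, JDJ_apply]
    split_ifs with h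
    · subst h; field_simp; ring
    · field_simp; ring
  · set W := deltaStar (delta X) with hWdef
    have hW : ∀ a b, W a b = (if a = b then ((n:ℝ) * X a a + ∑ k, X k k) / 2 else 0)
        - (X a a + X b b - 2 * X a b) / 2 := dsd_apply X hrow
    have hWdiag : ∀ k, W k k = ((n:ℝ) * X k k + ∑ l, X l l) / 2 := by
      intro k
      rw [hW k k]
      simp
      ring
    have hTrW : ∑ k, W k k = ((n:ℝ) * ∑ l, X l l) := by
      rw [Finset.sum_congr rfl fun k _ => hWdiag k]
      rw [← Finset.sum_div, Finset.sum_add_distrib, ← Finset.mul_sum, Finset.sum_const,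
        Finset.card_univ, Fintype.card_fin, nsmul_eq_mul]
      ring
    ext i j
    simp only [Matrix.sub_apply, JDJ_apply]
    rw [hTrW]
    simp only [hWdiag, hW i j]
    split_ifs with h
    · subst h; field_simp; ring
    · field_simp; ring
end

section
/- Let n ≥ 2. For every X ∈ Cent(n), one has ⟨X, (Δ*∘Δ)(X)⟩ = ‖Δ(X)‖_F² ≥ ‖X‖_F². -/
open Matrix

open SNL Matrix

theorem statement_17 {n : ℕ} (hn : 2 ≤ n) (X : Matrix (Fin n) (Fin n) ℝ)
    (hsymm : X.IsSymm) (hcent : X *ᵥ (fun _ => (1 : ℝ)) = 0) :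
    frobInner X (deltaStar (delta X)) = frobNormSq (delta X) ∧
    frobNormSq X ≤ frobNormSq (delta X) := by
  have hrow : ∀ i, ∑ k, X i k = 0 := by
    intro i
    have := congrFun hcent i
    simpa [Matrix.mulVec, dotProduct] using this
  have hsym : ∀ i j, X j i = X i j := fun i j => hsymm.apply i j
  have hcol : ∀ j, ∑ i, X i j = 0 := by
    intro j
    calc ∑ i, X i j = ∑ i, X j i := by
          exact Finset.sum_congr rfl fun i _ => hsym j i
      _ = 0 := hrow j
  set t : ℝ := ∑ i, X i i with ht
  set d : ℝ := ∑ i, (X i i)^2 with hd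
  set s : ℝ := ∑ i, ∑ j, (X i j)^2 with hs
  have hcross : ∑ i, ∑ j, (X i i + X j j) * X i j = 0 := by
    have h1 : ∑ i, ∑ j, X i i * X i j = 0 := by
      calc ∑ i, ∑ j, X i i * X i j = ∑ i, X i i * ∑ j, X i j := by
            exact Finset.sum_congr rfl fun i _ => (Finset.mul_sum _ _ _).symm
        _ = 0 := by simp [hrow]
    have h2 : ∑ i, ∑ j, X j j * X i j = 0 := by
      rw [Finset.sum_comm]
      calc ∑ j, ∑ i, X j j * X i j = ∑ j, X j j * ∑ i, X i j := by
            exact Finset.sum_congr rfl fun j _ => (Finset.mul_sum _ _ _).symm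
        _ = 0 := by simp [hcol]
    calc ∑ i, ∑ j, (X i i + X j j) * X i j
        = ∑ i, ∑ j, (X i i * X i j + X j j * X i j) := by
          exact Finset.sum_congr rfl fun i _ => Finset.sum_congr rfl fun j _ => by ring
      _ = (∑ i, ∑ j, X i i * X i j) + ∑ i, ∑ j, X j j * X i j := by
          simp [Finset.sum_add_distrib]
      _ = 0 := by rw [h1, h2]; ring
  have L2 : frobNormSq (delta X) = (n * d + t^2)/2 + s := by
    have expand : ∀ i j, ((X i i + X j j - 2 * X i j)/2) * ((X i i + X j j - 2 * X i j)/2)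
        = (X i i)^2/4 + (X j j)^2/4 + X i i * X j j / 2 + (X i j)^2
          - (X i i + X j j) * X i j := by intro i j; ring
    calc frobNormSq (delta X)
        = ∑ i, ∑ j, ((X i i)^2/4 + (X j j)^2/4 + X i i * X j j / 2 + (X i j)^2
            - (X i i + X j j) * X i j) := by
          unfold frobNormSq frobInner delta
          exact Finset.sum_congr rfl fun i _ => Finset.sum_congr rfl fun j _ => expand i j
      _ = (∑ i : Fin n, ∑ _j : Fin n, (X i i)^2/4) + (∑ _i : Fin n, ∑ j : Fin n, (X j j)^2/4)
            + (∑ i, ∑ j, X i i * X j j / 2) + s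
            - ∑ i, ∑ j, (X i i + X j j) * X i j := by
          rw [hs]
          simp only [Finset.sum_add_distrib, Finset.sum_sub_distrib]
      _ = (n * d + t^2)/2 + s := by
          rw [hcross]
          have e1 : ∑ i : Fin n, ∑ _j : Fin n, (X i i)^2/4 = n * d / 4 := by
            have h : ∀ i : Fin n, ∑ _j : Fin n, (X i i)^2/4 = (n : ℝ) * ((X i i)^2/4) := by
              intro i
              rw [Finset.sum_const, Finset.card_univ, Fintype.card_fin, nsmul_eq_mul]
            rw [Finset.sum_congr rfl fun i _ => h i, ← Finset.mul_sum, ← Finset.sum_div, ← hd]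
            ring
          have e2 : ∑ _i : Fin n, ∑ j : Fin n, (X j j)^2/4 = n * d / 4 := by
            rw [Finset.sum_comm]
            have h : ∀ i : Fin n, ∑ _j : Fin n, (X i i)^2/4 = (n : ℝ) * ((X i i)^2/4) := by
              intro i
              rw [Finset.sum_const, Finset.card_univ, Fintype.card_fin, nsmul_eq_mul]
            rw [Finset.sum_congr rfl fun i _ => h i, ← Finset.mul_sum, ← Finset.sum_div, ← hd]
            ring
          have e3 : ∑ i : Fin n, ∑ j : Fin n, X i i * X j j / 2 = t^2/2 := by
            have : ∀ i : Fin n, ∑ j : Fin n, X i i * X j j / 2 = X i i * t / 2 := by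
              intro i
              rw [← Finset.sum_div, ← Finset.mul_sum]
            rw [Finset.sum_congr rfl fun i _ => this i, ← Finset.sum_div,
              ← Finset.sum_mul]
            rw [← ht]; ring
          rw [e1, e2, e3]; ring
  have L1 : frobInner X (deltaStar (delta X)) = (n * d + t^2)/2 + s := by
    have hdsum : ∀ i, ∑ k, delta X i k = (n * X i i + t)/2 := by
      intro i
      unfold delta
      calc ∑ k, (X i i + X k k - 2 * X i k)/2
          = ((∑ k : Fin n, X i i) + (∑ k, X k k) - 2 * ∑ k, X i k)/2 := by
            rw [← Finset.sum_div]
            congr 1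
            simp [Finset.sum_sub_distrib, Finset.sum_add_distrib, Finset.mul_sum]
        _ = (n * X i i + t)/2 := by
            rw [hrow i, Finset.sum_const, Finset.card_univ, Fintype.card_fin,
              nsmul_eq_mul, ← ht]
            ring
    have step : frobInner X (deltaStar (delta X))
        = (∑ i, X i i * ((n * X i i + t)/2)) - ∑ i, ∑ j, X i j * delta X i j := by
      unfold frobInner deltaStar
      have : ∀ i, ∑ j, X i j * (Matrix.diagonal (fun i => ∑ k, delta X i k) i j - delta X i j)
          = X i i * ((n * X i i + t)/2) - ∑ j, X i j * delta X i j := by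
        intro i
        rw [show (∑ j, X i j * (Matrix.diagonal (fun i => ∑ k, delta X i k) i j - delta X i j))
            = (∑ j, X i j * Matrix.diagonal (fun i => ∑ k, delta X i k) i j)
              - ∑ j, X i j * delta X i j from by
          rw [← Finset.sum_sub_distrib]
          exact Finset.sum_congr rfl fun j _ => by ring]
        congr 1
        rw [Finset.sum_eq_single i]
        · simp [Matrix.diagonal, hdsum i]
        · intro j _ hj
          simp [Matrix.diagonal, (Ne.symm hj)]
        · simp
      simp only [Matrix.sub_apply]
      rw [Finset.sum_congr rfl fun i _ => this i, Finset.sum_sub_distrib]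
    have hsecond : ∑ i, ∑ j, X i j * delta X i j = -s := by
      unfold delta
      have expand : ∀ i j, X i j * ((X i i + X j j - 2 * X i j)/2)
          = (X i i + X j j) * X i j / 2 - (X i j)^2 := by intro i j; ring
      calc ∑ i, ∑ j, X i j * Matrix.of (fun i j => (X i i + X j j - 2 * X i j)/2) i j
          = ∑ i, ∑ j, ((X i i + X j j) * X i j / 2 - (X i j)^2) := by
            exact Finset.sum_congr rfl fun i _ => Finset.sum_congr rfl fun j _ => expand i j
        _ = (∑ i, ∑ j, (X i i + X j j) * X i j) / 2 - s := by
            simp [Finset.sum_sub_distrib, Finset.sum_div, hs]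
        _ = -s := by rw [hcross]; ring
    have hfirst : ∑ i, X i i * ((n * X i i + t)/2) = (n * d + t^2)/2 := by
      have : ∀ i, X i i * ((n * X i i + t)/2) = n * (X i i)^2 / 2 + X i i * t / 2 := by
        intro i; ring
      rw [Finset.sum_congr rfl fun i _ => this i, Finset.sum_add_distrib]
      rw [show (∑ i, n * (X i i)^2 / 2) = n * d / 2 from by
        rw [← Finset.sum_div, ← Finset.mul_sum, hd]]
      rw [show (∑ i, X i i * t / 2) = t^2/2 from by
        rw [← Finset.sum_div, ← Finset.sum_mul, ← ht]; ring]
      ring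
    rw [step, hsecond, hfirst]; ring
  have hXs : frobNormSq X = s := by
    unfold frobNormSq frobInner
    rw [hs]
    exact Finset.sum_congr rfl fun i _ => Finset.sum_congr rfl fun j _ => (pow_two (X i j)).symm
  constructor
  · rw [L1, L2]
  · rw [L2, hXs]
    have hd0 : 0 ≤ d := Finset.sum_nonneg fun i _ => sq_nonneg _
    nlinarith [sq_nonneg t, Nat.cast_nonneg (α := ℝ) n]
end

section
/- Let n ≥ 4. Suppose c > 0 and δ ∈ [0, 1) are such that for every X ∈ Cent(n) with rank(X) ≤ 2 one has (1 − δ)·‖X‖_F² ≤ c·‖Δ(X)‖_F² ≤ (1 + δ)·‖X‖_F². Then δ ≥ 1 − 4/(n + 2). (That is, the EDM map Δ fails the rank-2 restricted isometry property with any constant δ < 1 − 4/(n+2).) -/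
open Matrix

/-! Two test matrices in Cent(n) pin down the scale c from both sides. A symmetric rank-two matrix
with zero diagonal satisfies Δ(X) = -X, so the lower RIP bound gives 1 - δ ≤ c. For the rank-one
X = u uᵀ with u = n e₀ - 𝟙 one has Δ(X)ᵢⱼ = (uᵢ - uⱼ)²/2, hence ‖Δ(X)‖² = n⁴(n-1)/2 while
‖X‖² = n²(n-1)², and the upper RIP bound gives c n² ≤ 2(1 + δ)(n - 1). Together
(1 - δ) n² ≤ 2(1 + δ)(n - 1), which rearranges to δ ≥ 1 - 4/(n + 2). -/

open SNL Matrix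

theorem Matrix.rank_add_le {m k K : Type*} [Fintype k] [Field K] (A B : Matrix m k K) :
    (A + B).rank ≤ A.rank + B.rank := by
  rw [Matrix.rank, Matrix.rank, Matrix.rank, Matrix.mulVecLin_add]
  exact (Submodule.finrank_mono (LinearMap.range_add_le _ _)).trans
    (Submodule.finrank_add_le_finrank_add_finrank _ _)

theorem Fintype.sum_comp_pi_single {ι : Type*} [Fintype ι] [DecidableEq ι] (a : ι) (x : ℝ)
    (f : ℝ → ℝ) : ∑ i, f ((Pi.single a x : ι → ℝ) i) = f x + (Fintype.card ι - 1) * f 0 := by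
  rw [Fintype.sum_eq_add_sum_compl a, Pi.single_eq_same]
  have hoff : ∀ i ∈ ({a}ᶜ : Finset ι), f ((Pi.single a x : ι → ℝ) i) = f 0 := fun i hi =>
    by rw [Pi.single_eq_of_ne (by simpa using hi)]
  rw [Finset.sum_congr rfl hoff, Finset.sum_const, Finset.card_compl, Finset.card_singleton,
    nsmul_eq_mul, Nat.cast_sub (Fintype.card_pos_iff.2 ⟨a⟩)]
  simp

namespace SNL

variable {n : ℕ}

theorem frobNormSq_neg {m : ℕ} (X : Matrix (Fin n) (Fin m) ℝ) :
    frobNormSq (-X) = frobNormSq X := by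
  simp [frobNormSq, frobInner]

theorem frobNormSq_pos_of_ne_zero {m : ℕ} {X : Matrix (Fin n) (Fin m) ℝ} (hX : X ≠ 0) :
    0 < frobNormSq X := by
  obtain ⟨i, j, hij⟩ : ∃ i j, X i j ≠ 0 := by
    by_contra! h
    exact hX (Matrix.ext h)
  have hsq : ∀ i j, 0 ≤ X i j * X i j := fun _ _ => mul_self_nonneg _
  calc 0 < X i j * X i j := mul_self_pos.2 hij
    _ ≤ ∑ j', X i j' * X i j' := Finset.single_le_sum (fun j' _ => hsq i j') (Finset.mem_univ j)
    _ ≤ frobNormSq X := Finset.single_le_sum (f := fun i => ∑ j', X i j' * X i j')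
        (fun i' _ => Finset.sum_nonneg fun j' _ => hsq i' j') (Finset.mem_univ i)

theorem frobNormSq_vecMulVec_self (u : Fin n → ℝ) :
    frobNormSq (vecMulVec u u) = (u ⬝ᵥ u) ^ 2 := by
  simp only [frobNormSq, frobInner, vecMulVec_apply, dotProduct, sq, Finset.sum_mul_sum]
  refine Finset.sum_congr rfl fun i _ => Finset.sum_congr rfl fun j _ => ?_
  ring

theorem delta_eq_neg_of_diag_eq_zero {X : Matrix (Fin n) (Fin n) ℝ} (hX : ∀ i, X i i = 0) :
    delta X = -X := by
  ext i j
  simp only [delta, of_apply, hX, Matrix.neg_apply]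
  ring

theorem delta_vecMulVec_self_apply (u : Fin n → ℝ) (i j : Fin n) :
    delta (vecMulVec u u) i j = (u i - u j) ^ 2 / 2 := by
  simp only [delta, of_apply, vecMulVec_apply]
  ring

theorem vecMulVec_mulVec_one_eq_zero {u v : Fin n → ℝ} (hv : ∑ i, v i = 0) :
    vecMulVec u v *ᵥ (fun _ => (1 : ℝ)) = 0 := by
  rw [vecMulVec_mulVec]
  simp [dotProduct, hv]

def RankTwoRIP (n : ℕ) (c δ : ℝ) : Prop :=
  ∀ X : Matrix (Fin n) (Fin n) ℝ, X.IsSymm → X *ᵥ (fun _ => (1 : ℝ)) = 0 → X.rank ≤ 2 →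
    (1 - δ) * frobNormSq X ≤ c * frobNormSq (delta X) ∧
    c * frobNormSq (delta X) ≤ (1 + δ) * frobNormSq X

theorem exists_isSymm_rank_le_two_diag_eq_zero (hn : 4 ≤ n) :
    ∃ X : Matrix (Fin n) (Fin n) ℝ, X.IsSymm ∧ X *ᵥ (fun _ => (1 : ℝ)) = 0 ∧ X.rank ≤ 2 ∧
      (∀ i, X i i = 0) ∧ X ≠ 0 := by
  set v : Fin n → ℝ := Pi.single ⟨0, by omega⟩ 1 - Pi.single ⟨1, by omega⟩ 1
  set w : Fin n → ℝ := Pi.single ⟨2, by omega⟩ 1 - Pi.single ⟨3, by omega⟩ 1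
  have hv : ∑ i, v i = 0 := by simp [v]
  have hw : ∑ i, w i = 0 := by simp [w]
  -- `v` and `w` have disjoint supports, which makes the diagonal of `v wᵀ + w vᵀ` vanish.
  have hvw : ∀ i, v i * w i = 0 := by
    intro i
    simp only [v, w, Pi.sub_apply, Pi.single_apply, Fin.ext_iff]
    split_ifs <;> first | omega | ring
  refine ⟨vecMulVec v w + vecMulVec w v, ?_, ?_, ?_, ?_, ?_⟩
  · rw [IsSymm, transpose_add, transpose_vecMulVec, transpose_vecMulVec, add_comm]
  · rw [add_mulVec, vecMulVec_mulVec_one_eq_zero hw, vecMulVec_mulVec_one_eq_zero hv, add_zero]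
  · exact (rank_add_le _ _).trans (add_le_add (rank_vecMulVec_le _ _) (rank_vecMulVec_le _ _))
  · intro i
    rw [Matrix.add_apply, vecMulVec_apply, vecMulVec_apply, hvw, mul_comm, hvw, add_zero]
  · intro h
    have := congr_fun₂ h ⟨0, by omega⟩ ⟨2, by omega⟩
    simp [v, w, vecMulVec_apply] at this

theorem RankTwoRIP.mul_sq_le {c δ : ℝ} (h : RankTwoRIP n c δ) (hn : 2 ≤ n) :
    c * n ^ 2 ≤ 2 * (1 + δ) * (n - 1) := by
  set a : Fin n := ⟨0, by omega⟩
  set u : Fin n → ℝ := fun i => (Pi.single a (n : ℝ) : Fin n → ℝ) i - 1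
  have hu : ∑ i, u i = 0 := by
    simp only [u]
    rw [Fintype.sum_comp_pi_single a n (fun t => t - 1)]
    simp
  have huu : u ⬝ᵥ u = n * (n - 1) := by
    simp only [dotProduct, u]
    rw [Fintype.sum_comp_pi_single a n (fun t => (t - 1) * (t - 1)), Fintype.card_fin]
    ring
  have hdelta : frobNormSq (delta (vecMulVec u u)) = n ^ 4 * (n - 1) / 2 := by
    simp only [frobNormSq, frobInner, delta_vecMulVec_self_apply, u, sub_sub_sub_cancel_right]
    set s : Fin n → ℝ := Pi.single a (n : ℝ)
    rw [Fintype.sum_comp_pi_single a n (fun t => ∑ j, ((t - s j) ^ 2 / 2) * ((t - s j) ^ 2 / 2)),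
      Fintype.sum_comp_pi_single a n (fun t => ((n - t) ^ 2 / 2) * ((n - t) ^ 2 / 2)),
      Fintype.sum_comp_pi_single a n (fun t => ((0 - t) ^ 2 / 2) * ((0 - t) ^ 2 / 2)),
      Fintype.card_fin]
    ring
  have hupper := (h _ (transpose_vecMulVec u u) (vecMulVec_mulVec_one_eq_zero hu)
    ((rank_vecMulVec_le u u).trans one_le_two)).2
  rw [hdelta, frobNormSq_vecMulVec_self, huu] at hupper
  have hn1 : (1 : ℝ) < n := by exact_mod_cast hn
  refine le_of_mul_le_mul_left (a := (n : ℝ) ^ 2 * (n - 1) / 2) ?_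
    (div_pos (mul_pos (by positivity) (by linarith)) two_pos)
  linarith

theorem RankTwoRIP.one_sub_le {c δ : ℝ} (h : RankTwoRIP n c δ) (hn : 4 ≤ n) : 1 - δ ≤ c := by
  obtain ⟨X, hsymm, hcent, hrank, hdiag, hX⟩ := exists_isSymm_rank_le_two_diag_eq_zero hn
  have hlower := (h X hsymm hcent hrank).1
  rw [delta_eq_neg_of_diag_eq_zero hdiag, frobNormSq_neg] at hlower
  exact le_of_mul_le_mul_right hlower (frobNormSq_pos_of_ne_zero hX)

end SNL

theorem one_sub_four_div_le_of_mul_sq_le {N δ : ℝ} (hN : 1 ≤ N)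
    (h : (1 - δ) * N ^ 2 ≤ 2 * (1 + δ) * (N - 1)) : 1 - 4 / (N + 2) ≤ δ := by
  have hN2 : 0 < N + 2 := by linarith
  rw [one_sub_div hN2.ne', div_le_iff₀ hN2]
  nlinarith

theorem statement_18_general {n : ℕ} (hn : 4 ≤ n) (c δ : ℝ)
    (hRIP : ∀ X : Matrix (Fin n) (Fin n) ℝ, X.IsSymm → X *ᵥ (fun _ => (1 : ℝ)) = 0 →
      X.rank ≤ 2 →
      (1 - δ) * frobNormSq X ≤ c * frobNormSq (delta X) ∧
      c * frobNormSq (delta X) ≤ (1 + δ) * frobNormSq X) :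
    δ ≥ 1 - 4 / ((n : ℝ) + 2) := by
  have hN : (1 : ℝ) ≤ n := by exact_mod_cast (by omega : 1 ≤ n)
  refine one_sub_four_div_le_of_mul_sq_le hN ?_
  calc (1 - δ) * (n : ℝ) ^ 2 ≤ c * n ^ 2 := by gcongr; exact RankTwoRIP.one_sub_le hRIP hn
    _ ≤ 2 * (1 + δ) * (n - 1) := RankTwoRIP.mul_sq_le hRIP (by omega)

theorem statement_18 {n : ℕ} (hn : 4 ≤ n) (c δ : ℝ) (hc : 0 < c)
    (hδ0 : 0 ≤ δ) (hδ1 : δ < 1)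
    (hRIP : ∀ X : Matrix (Fin n) (Fin n) ℝ, X.IsSymm → X *ᵥ (fun _ => (1 : ℝ)) = 0 →
      X.rank ≤ 2 →
      (1 - δ) * frobNormSq X ≤ c * frobNormSq (delta X) ∧
      c * frobNormSq (delta X) ≤ (1 + δ) * frobNormSq X) :
    δ ≥ 1 - 4 / ((n : ℝ) + 2) :=
  statement_18_general hn c δ hRIP
end
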